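/- arXiv:1511.00580 — 5 statements merged into one kernel-verified Lean document; each statement's English description precedes it below -/
import Mathlib

section
/- Let γ = [[a,b],[c,d]] ∈ SL₂(ℂ) with complex entries written in polar form. If Im(a·conj(c)) = 0, Im(a·conj(d) + b·conj(c)) = 0, and Im(b·conj(d)) = 0, and ad - bc = 1, then either all of a, b, c, d are real, or all of a, b, c, d are purely imaginary. -/
/-!
Write `γ = R + i I` with real matrices `R`, `I`. The three hypotheses together with `Im det γ = 0`
say exactly that `adj R * I = 0` and `adj I * R = 0`, i.e. every column of `R` is parallel to
every column of `I`. Multiplying by `R` (resp. `I`) gives `det R • I = 0` and `det I • R = 0`,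
while `Re det γ = det R - det I = 1`, so one of the two determinants is nonzero and the other
matrix vanishes.
-/

open Complex

namespace Matrix

variable {n K : Type*} [Fintype n] [DecidableEq n]

theorem det_smul_eq_zero_of_adjugate_mul_eq_zero [CommRing K] {R I : Matrix n n K}
    (h : adjugate R * I = 0) : R.det • I = 0 :=
  calc R.det • I = R * adjugate R * I := by rw [mul_adjugate, smul_mul, Matrix.one_mul]
    _ = 0 := by rw [Matrix.mul_assoc, h, Matrix.mul_zero]

theorem det_eq_zero_or_eq_zero_of_adjugate_mul_eq_zero [Field K] {R I : Matrix n n K}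
    (h : adjugate R * I = 0) : R.det = 0 ∨ I = 0 :=
  smul_eq_zero.mp (det_smul_eq_zero_of_adjugate_mul_eq_zero h)

end Matrix

open Matrix

theorem det_map_re_sub_det_map_im (M : Matrix (Fin 2) (Fin 2) ℂ) :
    (M.map re).det - (M.map im).det = M.det.re := by
  simp only [det_fin_two, map_apply, sub_re, mul_re]
  ring

theorem adjugate_map_re_mul_map_im_eq_zero {a b c d : ℂ}
    (h1 : (a * (starRingEnd ℂ) c).im = 0)
    (h2 : (a * (starRingEnd ℂ) d + b * (starRingEnd ℂ) c).im = 0)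
    (h3 : (b * (starRingEnd ℂ) d).im = 0)
    (hdet : (a * d - b * c).im = 0) :
    adjugate (!![a, b; c, d].map re) * !![a, b; c, d].map im = 0 ∧
      adjugate (!![a, b; c, d].map im) * !![a, b; c, d].map re = 0 := by
  simp only [mul_im, add_im, sub_im, conj_re, conj_im] at h1 h2 h3 hdet
  constructor <;> ext i j <;> fin_cases i <;> fin_cases j <;>
    simp only [adjugate_fin_two, map_apply, of_apply, cons_val', cons_val_zero, cons_val_one,
      cons_val_fin_one, Fin.zero_eta, Fin.mk_one, Matrix.mul_apply, Fin.sum_univ_two, neg_mul,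
      Matrix.zero_apply] <;>
    linarith

theorem stmt_0 (a b c d : ℂ)
    (h1 : (a * (starRingEnd ℂ) c).im = 0)
    (h2 : (a * (starRingEnd ℂ) d + b * (starRingEnd ℂ) c).im = 0)
    (h3 : (b * (starRingEnd ℂ) d).im = 0)
    (hdet : a * d - b * c = 1) :
    (a.im = 0 ∧ b.im = 0 ∧ c.im = 0 ∧ d.im = 0) ∨
    (a.re = 0 ∧ b.re = 0 ∧ c.re = 0 ∧ d.re = 0) := by
  set M := !![a, b; c, d] with hM
  have hdetM : (M.map re).det - (M.map im).det = 1 := by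
    rw [det_map_re_sub_det_map_im, hM, det_fin_two_of, hdet, one_re]
  obtain ⟨hRI, hIR⟩ := adjugate_map_re_mul_map_im_eq_zero h1 h2 h3 (by rw [hdet, one_im])
  rcases det_eq_zero_or_eq_zero_of_adjugate_mul_eq_zero hRI with hRdet | hI
  · have hIdet : (M.map im).det ≠ 0 := by linarith
    have hR := (det_eq_zero_or_eq_zero_of_adjugate_mul_eq_zero hIR).resolve_left hIdet
    right
    simpa [M, ← Matrix.ext_iff, Fin.forall_fin_two, and_assoc] using hR
  · left
    simpa [M, ← Matrix.ext_iff, Fin.forall_fin_two, and_assoc] using hI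
end

section
/- Let λ ≥ 0 and let ξ : [0, π/2) → ℝ solve the ODE cos²v · ξ''(v) + sin v cos v · ξ'(v) + λ ξ(v) = 0 with ξ(0) = 1 and ξ'(0) = 0. Then |ξ(v)| ≤ 1 for all v ∈ [0, π/2). -/
/-!
The energy `E(v) = cos²v · ξ'(v)² + λ ξ(v)²` has derivative `-4 sin v cos v · ξ'(v)²` along
solutions, so it decreases on `[0, π/2)` from its initial value `E(0) = λ`. For `λ > 0` this gives
`ξ² ≤ 1` directly; for `λ = 0` it forces `ξ' = 0`, so `ξ` stays equal to `ξ(0) = 1`.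
-/

open Real Set

noncomputable def odeEnergy (lam : ℝ) (ξ ξ' : ℝ → ℝ) (v : ℝ) : ℝ :=
  cos v ^ 2 * ξ' v ^ 2 + lam * ξ v ^ 2

lemma hasDerivAt_odeEnergy {lam v : ℝ} {ξ ξ' ξ'' : ℝ → ℝ}
    (hd1 : HasDerivAt ξ (ξ' v) v) (hd2 : HasDerivAt ξ' (ξ'' v) v)
    (hode : cos v ^ 2 * ξ'' v + sin v * cos v * ξ' v + lam * ξ v = 0) :
    HasDerivAt (odeEnergy lam ξ ξ') (-(4 * sin v * cos v * ξ' v ^ 2)) v := by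
  have h := (((hasDerivAt_cos v).fun_pow 2).fun_mul (hd2.fun_pow 2)).fun_add
    ((hd1.fun_pow 2).const_mul lam)
  exact h.congr_deriv (by linear_combination (2 * ξ' v) * hode)

lemma sin_mul_cos_nonneg_of_mem_Ico {v : ℝ} (hv : v ∈ Ico 0 (π / 2)) : 0 ≤ sin v * cos v :=
  mul_nonneg (sin_nonneg_of_nonneg_of_le_pi hv.1 (by linarith [hv.2, pi_pos]))
    (cos_nonneg_of_mem_Icc ⟨by linarith [hv.1, pi_pos], hv.2.le⟩)

lemma antitoneOn_odeEnergy {lam : ℝ} {ξ ξ' ξ'' : ℝ → ℝ}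
    (hd1 : ∀ v ∈ Ico 0 (π / 2), HasDerivAt ξ (ξ' v) v)
    (hd2 : ∀ v ∈ Ico 0 (π / 2), HasDerivAt ξ' (ξ'' v) v)
    (hode : ∀ v ∈ Ico 0 (π / 2),
      cos v ^ 2 * ξ'' v + sin v * cos v * ξ' v + lam * ξ v = 0) :
    AntitoneOn (odeEnergy lam ξ ξ') (Ico 0 (π / 2)) := by
  have hE : ∀ v ∈ Ico 0 (π / 2), HasDerivAt (odeEnergy lam ξ ξ') _ v := fun v hv =>
    hasDerivAt_odeEnergy (hd1 v hv) (hd2 v hv) (hode v hv)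
  refine antitoneOn_of_hasDerivWithinAt_nonpos (convex_Ico 0 (π / 2))
    (fun v hv => (hE v hv).continuousAt.continuousWithinAt)
    (fun v hv => (hE v (interior_subset hv)).hasDerivWithinAt) (fun v hv => ?_)
  have := mul_nonneg (sin_mul_cos_nonneg_of_mem_Ico (interior_subset hv)) (sq_nonneg (ξ' v))
  linarith

lemma eq_of_hasDerivAt_zero_of_mem_Ico {f : ℝ → ℝ} {a b : ℝ}
    (hf : ∀ x ∈ Ico a b, HasDerivAt f 0 x) : ∀ x ∈ Ico a b, f x = f a := fun x hx =>
  constant_of_has_deriv_right_zero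
    (fun y hy => (hf y ⟨hy.1, hy.2.trans_lt hx.2⟩).continuousAt.continuousWithinAt)
    (fun y hy => (hf y ⟨hy.1, hy.2.trans hx.2⟩).hasDerivWithinAt) x ⟨hx.1, le_rfl⟩

theorem stmt_3_general (lam : ℝ) (hlam : 0 ≤ lam) (ξ ξ' ξ'' : ℝ → ℝ)
    (hd1 : ∀ v ∈ Ico 0 (π/2), HasDerivAt ξ (ξ' v) v)
    (hd2 : ∀ v ∈ Ico 0 (π/2), HasDerivAt ξ' (ξ'' v) v)
    (hode : ∀ v ∈ Ico 0 (π/2),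
      cos v ^ 2 * ξ'' v + sin v * cos v * ξ' v + lam * ξ v = 0)
    (h0 : ξ 0 = 1) (h0' : ξ' 0 = 0) :
    ∀ v ∈ Ico 0 (π/2), |ξ v| ≤ 1 := by
  have hE : ∀ v ∈ Ico 0 (π/2), odeEnergy lam ξ ξ' v ≤ lam := fun v hv => by
    simpa [odeEnergy, h0, h0'] using
      antitoneOn_odeEnergy hd1 hd2 hode ⟨le_rfl, by positivity⟩ hv hv.1
  rcases hlam.eq_or_lt with rfl | hlam
  · have hξ' : ∀ w ∈ Ico 0 (π/2), ξ' w = 0 := fun w hw => by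
      have hcos : 0 < cos w := cos_pos_of_mem_Ioo ⟨by linarith [hw.1, pi_pos], hw.2⟩
      have : cos w ^ 2 * ξ' w ^ 2 ≤ 0 := by simpa [odeEnergy] using hE w hw
      exact pow_eq_zero_iff two_ne_zero |>.mp
        (le_antisymm (nonpos_of_mul_nonpos_right this (by positivity)) (sq_nonneg _))
    intro v hv
    have hconst := eq_of_hasDerivAt_zero_of_mem_Ico (f := ξ) fun w hw => hξ' w hw ▸ hd1 w hw
    rw [hconst v hv, h0, abs_one]
  · intro v hv
    have hEv : cos v ^ 2 * ξ' v ^ 2 + lam * ξ v ^ 2 ≤ lam := hE v hv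
    have : lam * ξ v ^ 2 ≤ lam * 1 := by
      linarith [mul_nonneg (sq_nonneg (cos v)) (sq_nonneg (ξ' v))]
    exact sq_le_one_iff_abs_le_one _ |>.mp (le_of_mul_le_mul_left this hlam)

/-- If `ξ` solves `cos²v ξ'' + sin v cos v ξ' + λ ξ = 0` on `[0, π/2)` with `ξ(0) = 1`,
`ξ'(0) = 0`, and `λ ≥ 0`, then `|ξ(v)| ≤ 1` on `[0, π/2)`. -/
theorem stmt_3 (lam : ℝ) (hlam : 0 ≤ lam) (ξ ξ' ξ'' : ℝ → ℝ)
    (hd1 : ∀ v ∈ Ico 0 (π/2), HasDerivAt ξ (ξ' v) v)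
    (hd2 : ∀ v ∈ Ico 0 (π/2), HasDerivAt ξ' (ξ'' v) v)
    (hcont : ContinuousOn ξ'' (Ico 0 (π/2)))
    (hode : ∀ v ∈ Ico 0 (π/2),
      cos v ^ 2 * ξ'' v + sin v * cos v * ξ' v + lam * ξ v = 0)
    (h0 : ξ 0 = 1) (h0' : ξ' 0 = 0) :
    ∀ v ∈ Ico 0 (π/2), |ξ v| ≤ 1 :=
  stmt_3_general lam hlam ξ ξ' ξ'' hd1 hd2 hode h0 h0'
end

section
/- Let λ ≥ 0 and let ξ : [0, π/2) → ℝ solve cos²v · ξ''(v) + sin v cos v · ξ'(v) + λ ξ(v) = 0 with ξ(0) = 1, ξ'(0) = 0. Then ξ(v) ≥ 1 - ((2+λ)/2)·tan²v for all v ∈ [0, π/2). -/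
/-!
In the form `(ξ' / cos)' = -λ ξ / cos³` the equation yields three monotone quantities on
`[0, π/2)`. The energy `λ ξ² + cos² ξ'²` has derivative `-4 sin cos ξ'² ≤ 0`, so `λ ξ ≤ λ`.
Hence `ξ' / cos + λ sin / cos²`, whose derivative is `λ (1 + sin² - ξ) / cos³ ≥ 0`, stays
nonnegative, i.e. `ξ' ≥ -λ tan`. Finally `ξ + (λ / 2) tan²` has derivative
`ξ' + λ tan / cos² ≥ 0`, so `ξ ≥ 1 - (λ / 2) tan²`, which is stronger than the claim.
-/

open Real Set

theorem monotoneOn_of_hasDerivAt_nonneg {D : Set ℝ} (hD : Convex ℝ D) {f f' : ℝ → ℝ}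
    (hf : ∀ x ∈ D, HasDerivAt f (f' x) x) (hf' : ∀ x ∈ D, 0 ≤ f' x) : MonotoneOn f D :=
  monotoneOn_of_hasDerivWithinAt_nonneg hD
    (fun x hx => (hf x hx).continuousAt.continuousWithinAt)
    (fun x hx => (hf x (interior_subset hx)).hasDerivWithinAt)
    (fun x hx => hf' x (interior_subset hx))

theorem antitoneOn_of_hasDerivAt_nonpos {D : Set ℝ} (hD : Convex ℝ D) {f f' : ℝ → ℝ}
    (hf : ∀ x ∈ D, HasDerivAt f (f' x) x) (hf' : ∀ x ∈ D, f' x ≤ 0) : AntitoneOn f D := by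
  have := monotoneOn_of_hasDerivAt_nonneg hD (fun x hx => (hf x hx).neg)
    (fun x hx => neg_nonneg.2 (hf' x hx))
  simpa using this.neg

namespace Real

theorem cos_pos_of_mem_Ico {x : ℝ} (hx : x ∈ Ico 0 (π / 2)) : 0 < cos x :=
  cos_pos_of_mem_Ioo ⟨by linarith [pi_pos, hx.1], hx.2⟩

theorem hasDerivAt_sin_div_cos_sq {x : ℝ} (hx : cos x ≠ 0) :
    HasDerivAt (fun x => sin x / cos x ^ 2) ((1 + sin x ^ 2) / cos x ^ 3) x := by
  refine ((hasDerivAt_sin x).div ((hasDerivAt_cos x).pow 2) (pow_ne_zero 2 hx)).congr_deriv ?_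
  simp only [Pi.pow_apply]
  field_simp
  linear_combination cos x * sin_sq_add_cos_sq x

theorem hasDerivAt_tan_sq {x : ℝ} (hx : cos x ≠ 0) :
    HasDerivAt (fun x => tan x ^ 2) (2 * tan x / cos x ^ 2) x := by
  refine ((hasDerivAt_tan hx).pow 2).congr_deriv ?_
  ring

end Real

structure SolvesODE (lam : ℝ) (ξ ξ' ξ'' : ℝ → ℝ) : Prop where
  hasDerivAt : ∀ v ∈ Ico 0 (π / 2), HasDerivAt ξ (ξ' v) v
  hasDerivAt_deriv : ∀ v ∈ Ico 0 (π / 2), HasDerivAt ξ' (ξ'' v) v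
  ode : ∀ v ∈ Ico 0 (π / 2), cos v ^ 2 * ξ'' v + sin v * cos v * ξ' v + lam * ξ v = 0

namespace SolvesODE

variable {lam : ℝ} {ξ ξ' ξ'' : ℝ → ℝ} {v : ℝ}

theorem hasDerivAt_energy (h : SolvesODE lam ξ ξ' ξ'') (hv : v ∈ Ico 0 (π / 2)) :
    HasDerivAt (fun v => lam * ξ v ^ 2 + cos v ^ 2 * ξ' v ^ 2)
      (-(4 * sin v * cos v * ξ' v ^ 2)) v := by
  refine ((((h.hasDerivAt v hv).pow 2).const_mul lam).add
    (((hasDerivAt_cos v).pow 2).mul ((h.hasDerivAt_deriv v hv).pow 2))).congr_deriv ?_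
  simp only [Pi.pow_apply]
  linear_combination (2 * ξ' v) * h.ode v hv

theorem mul_le_self (h : SolvesODE lam ξ ξ' ξ'') (hlam : 0 ≤ lam) (h0 : ξ 0 = 1) (h0' : ξ' 0 = 0)
    (hv : v ∈ Ico 0 (π / 2)) : lam * ξ v ≤ lam := by
  have hanti := antitoneOn_of_hasDerivAt_nonpos (convex_Ico 0 (π / 2))
    (fun x hx => h.hasDerivAt_energy hx) fun x hx => by
      have hs : 0 ≤ sin x := sin_nonneg_of_nonneg_of_le_pi hx.1 (by linarith [hx.2, pi_pos])
      have := mul_nonneg (mul_nonneg hs (cos_pos_of_mem_Ico hx).le) (sq_nonneg (ξ' x))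
      linarith
  have hE : lam * ξ v ^ 2 + cos v ^ 2 * ξ' v ^ 2 ≤ lam := by
    simpa [h0, h0'] using hanti ⟨le_rfl, by positivity⟩ hv hv.1
  nlinarith [mul_nonneg hlam (sq_nonneg (ξ v - 1)), sq_nonneg (cos v * ξ' v)]

theorem hasDerivAt_deriv_div_cos (h : SolvesODE lam ξ ξ' ξ'') (hv : v ∈ Ico 0 (π / 2)) :
    HasDerivAt (fun v => ξ' v / cos v) (-(lam * ξ v) / cos v ^ 3) v := by
  have hc := (cos_pos_of_mem_Ico hv).ne'
  refine ((h.hasDerivAt_deriv v hv).div (hasDerivAt_cos v) hc).congr_deriv ?_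
  field_simp
  linear_combination h.ode v hv

theorem neg_mul_tan_le_deriv (h : SolvesODE lam ξ ξ' ξ'') (hlam : 0 ≤ lam) (h0 : ξ 0 = 1)
    (h0' : ξ' 0 = 0) (hv : v ∈ Ico 0 (π / 2)) : -(lam * tan v) ≤ ξ' v := by
  have hmono := monotoneOn_of_hasDerivAt_nonneg (convex_Ico 0 (π / 2))
    (fun x hx => (h.hasDerivAt_deriv_div_cos hx).add
      ((hasDerivAt_sin_div_cos_sq (cos_pos_of_mem_Ico hx).ne').const_mul lam)) fun x hx => by
      have hc := cos_pos_of_mem_Ico hx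
      have hξ := h.mul_le_self hlam h0 h0' hx
      rw [show -(lam * ξ x) / cos x ^ 3 + lam * ((1 + sin x ^ 2) / cos x ^ 3)
        = (lam * (1 + sin x ^ 2) - lam * ξ x) / cos x ^ 3 by ring]
      exact div_nonneg (by nlinarith [sq_nonneg (sin x)]) (by positivity)
  have hF : 0 ≤ ξ' v / cos v + lam * (sin v / cos v ^ 2) := by
    simpa [h0'] using hmono ⟨le_rfl, by positivity⟩ hv hv.1
  have hc := cos_pos_of_mem_Ico hv
  have hscale : ξ' v + lam * tan v = cos v * (ξ' v / cos v + lam * (sin v / cos v ^ 2)) := by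
    rw [tan_eq_sin_div_cos]
    field_simp
  linarith [mul_nonneg hc.le hF]

theorem one_sub_le (h : SolvesODE lam ξ ξ' ξ'') (hlam : 0 ≤ lam) (h0 : ξ 0 = 1)
    (h0' : ξ' 0 = 0) (hv : v ∈ Ico 0 (π / 2)) : 1 - lam / 2 * tan v ^ 2 ≤ ξ v := by
  have hmono := monotoneOn_of_hasDerivAt_nonneg (convex_Ico 0 (π / 2))
    (fun x hx => (h.hasDerivAt x hx).add
      ((hasDerivAt_tan_sq (cos_pos_of_mem_Ico hx).ne').const_mul (lam / 2))) fun x hx => by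
      have hc := cos_pos_of_mem_Ico hx
      have ht := tan_nonneg_of_nonneg_of_le_pi_div_two hx.1 hx.2.le
      have hξ' := h.neg_mul_tan_le_deriv hlam h0 h0' hx
      have : lam * tan x ≤ lam * tan x / cos x ^ 2 :=
        le_div_self (by positivity) (by positivity) (pow_le_one₀ hc.le (cos_le_one x))
      linarith [show lam / 2 * (2 * tan x / cos x ^ 2) = lam * tan x / cos x ^ 2 by ring]
  have h0v : 1 ≤ ξ v + lam / 2 * tan v ^ 2 := by
    simpa [h0] using hmono ⟨le_rfl, by positivity⟩ hv hv.1
  linarith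

end SolvesODE

theorem stmt_4_general (lam : ℝ) (hlam : 0 ≤ lam) (ξ ξ' ξ'' : ℝ → ℝ)
    (hd1 : ∀ v ∈ Ico 0 (π/2), HasDerivAt ξ (ξ' v) v)
    (hd2 : ∀ v ∈ Ico 0 (π/2), HasDerivAt ξ' (ξ'' v) v)
    (hode : ∀ v ∈ Ico 0 (π/2),
      cos v ^ 2 * ξ'' v + sin v * cos v * ξ' v + lam * ξ v = 0)
    (h0 : ξ 0 = 1) (h0' : ξ' 0 = 0) :
    ∀ v ∈ Ico 0 (π/2), ξ v ≥ 1 - ((2 + lam) / 2) * tan v ^ 2 := by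
  intro v hv
  have hbound := (SolvesODE.mk hd1 hd2 hode).one_sub_le hlam h0 h0' hv
  nlinarith [sq_nonneg (tan v)]

/-- If `ξ` solves `cos²v ξ'' + sin v cos v ξ' + λ ξ = 0` on `[0, π/2)` with `ξ(0) = 1`,
`ξ'(0) = 0`, and `λ ≥ 0`, then `|ξ(v)| ≤ 1` on `[0, π/2)`. -/
theorem stmt_4 (lam : ℝ) (hlam : 0 ≤ lam) (ξ ξ' ξ'' : ℝ → ℝ)
    (hd1 : ∀ v ∈ Ico 0 (π/2), HasDerivAt ξ (ξ' v) v)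
    (hd2 : ∀ v ∈ Ico 0 (π/2), HasDerivAt ξ' (ξ'' v) v)
    (hcont : ContinuousOn ξ'' (Ico 0 (π/2)))
    (hode : ∀ v ∈ Ico 0 (π/2),
      cos v ^ 2 * ξ'' v + sin v * cos v * ξ' v + lam * ξ v = 0)
    (h0 : ξ 0 = 1) (h0' : ξ' 0 = 0) :
    ∀ v ∈ Ico 0 (π/2), ξ v ≥ 1 - ((2 + lam) / 2) * tan v ^ 2 :=
  stmt_4_general lam hlam ξ ξ' ξ'' hd1 hd2 hode h0 h0'
end

section
/- For λ ≥ 0 with 1 - λ = (s-1)² (s real or complex with s(2-s) = λ), the function ξ(v) = cosh((s-1)·arcsinh(tan v)) · cos v satisfies the ODE cos²v · ξ''(v) + sin v cos v · ξ'(v) + λ ξ(v) = 0 on (-π/2, π/2), with ξ(0) = 1 and ξ'(0) = 0. -/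
open Real Set

/-!
With `u v = arsinh (tan v)` (the inverse Gudermannian function) one has `u' = 1 / cos v` on
`(-π/2, π/2)`. Writing `a = s - 1`, this gives `ξ' = -sin v cosh (a u) + a sinh (a u)`, and then
`cos² v ξ'' + sin v cos v ξ' = (a² - 1) ξ = -λ ξ`.
-/

theorem hasDerivAt_arsinh_tan {v : ℝ} (hv : 0 < cos v) :
    HasDerivAt (fun v => arsinh (tan v)) (cos v)⁻¹ v := by
  have hsqrt : √(1 + tan v ^ 2) = (cos v)⁻¹ := by
    rw [← inv_inv (1 + tan v ^ 2), inv_one_add_tan_sq hv.ne', sqrt_inv, sqrt_sq hv.le]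
  refine ((hasDerivAt_arsinh _).comp v (hasDerivAt_tan hv.ne')).congr_deriv ?_
  rw [hsqrt]
  field_simp

section

variable (a : ℂ) {v : ℝ}

theorem hasDerivAt_cosh_mul_arsinh_tan (hv : 0 < cos v) :
    HasDerivAt (fun v => Complex.cosh (a * arsinh (tan v)))
      (a * Complex.sinh (a * arsinh (tan v)) / cos v) v := by
  refine ((Complex.hasDerivAt_cosh _).comp v
    (((hasDerivAt_arsinh_tan hv).ofReal_comp).const_mul a)).congr_deriv ?_
  rw [Complex.ofReal_inv]
  ring

theorem hasDerivAt_sinh_mul_arsinh_tan (hv : 0 < cos v) :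
    HasDerivAt (fun v => Complex.sinh (a * arsinh (tan v)))
      (a * Complex.cosh (a * arsinh (tan v)) / cos v) v := by
  refine ((Complex.hasDerivAt_sinh _).comp v
    (((hasDerivAt_arsinh_tan hv).ofReal_comp).const_mul a)).congr_deriv ?_
  rw [Complex.ofReal_inv]
  ring

theorem hasDerivAt_cos_mul_cosh_mul_arsinh_tan (hv : 0 < cos v) :
    HasDerivAt (fun v => (cos v : ℂ) * Complex.cosh (a * arsinh (tan v)))
      (-sin v * Complex.cosh (a * arsinh (tan v)) + a * Complex.sinh (a * arsinh (tan v))) v := by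
  have hcos : (cos v : ℂ) ≠ 0 := mod_cast hv.ne'
  refine (((hasDerivAt_cos v).ofReal_comp).mul
    (hasDerivAt_cosh_mul_arsinh_tan a hv)).congr_deriv ?_
  field_simp
  rw [Complex.ofReal_neg]
  ring

theorem hasDerivAt_neg_sin_mul_cosh_add_mul_sinh (hv : 0 < cos v) :
    HasDerivAt (fun v => -sin v * Complex.cosh (a * arsinh (tan v))
        + a * Complex.sinh (a * arsinh (tan v)))
      (-cos v * Complex.cosh (a * arsinh (tan v))
        + (a ^ 2 * Complex.cosh (a * arsinh (tan v))
          - sin v * a * Complex.sinh (a * arsinh (tan v))) / cos v) v := by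
  refine ((((hasDerivAt_sin v).ofReal_comp).neg.mul (hasDerivAt_cosh_mul_arsinh_tan a hv)).add
    ((hasDerivAt_sinh_mul_arsinh_tan a hv).const_mul a)).congr_deriv ?_
  simp only [Pi.neg_apply]
  ring

theorem deriv_deriv_cos_mul_cosh_mul_arsinh_tan (hv : 0 < cos v) :
    deriv (deriv fun v => (cos v : ℂ) * Complex.cosh (a * arsinh (tan v))) v =
      -cos v * Complex.cosh (a * arsinh (tan v))
        + (a ^ 2 * Complex.cosh (a * arsinh (tan v))
          - sin v * a * Complex.sinh (a * arsinh (tan v))) / cos v := by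
  have hderiv : (deriv fun v => (cos v : ℂ) * Complex.cosh (a * arsinh (tan v))) =ᶠ[nhds v]
      fun v => -sin v * Complex.cosh (a * arsinh (tan v))
        + a * Complex.sinh (a * arsinh (tan v)) := by
    filter_upwards [(continuous_cos.tendsto v).eventually (lt_mem_nhds hv)] with w hw
    exact (hasDerivAt_cos_mul_cosh_mul_arsinh_tan a hw).deriv
  rw [hderiv.deriv_eq, (hasDerivAt_neg_sin_mul_cosh_add_mul_sinh a hv).deriv]

end

/-- For `λ = s(2-s)`, the function `ξ(v) = cos v · cosh((s-1)·arcsinh(tan v))` satisfies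
`cos²v ξ'' + sin v cos v ξ' + λ ξ = 0` on `(-π/2, π/2)` with `ξ(0) = 1`, `ξ'(0) = 0`. -/
theorem stmt_5 (s lam : ℂ) (hlam : lam = s * (2 - s))
    (ξ : ℝ → ℂ)
    (hξ : ξ = fun v => (Real.cos v : ℂ) * Complex.cosh ((s - 1) * (Real.arsinh (Real.tan v) : ℂ))) :
    (∀ v ∈ Ioo (-(π/2)) (π/2),
        (Real.cos v : ℂ) ^ 2 * deriv (deriv ξ) v
          + (Real.sin v : ℂ) * (Real.cos v : ℂ) * deriv ξ v + lam * ξ v = 0)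
    ∧ ξ 0 = 1 ∧ deriv ξ 0 = 0 := by
  subst hξ hlam
  refine ⟨fun v hv => ?_, by simp, ?_⟩
  · have hcos := cos_pos_of_mem_Ioo hv
    have hcos' : (cos v : ℂ) ≠ 0 := mod_cast hcos.ne'
    have hpyth : (sin v : ℂ) ^ 2 + (cos v : ℂ) ^ 2 = 1 := mod_cast sin_sq_add_cos_sq v
    rw [deriv_deriv_cos_mul_cosh_mul_arsinh_tan _ hcos,
      (hasDerivAt_cos_mul_cosh_mul_arsinh_tan _ hcos).deriv]
    field_simp
    linear_combination (-cos v : ℂ) * Complex.cosh ((s - 1) * arsinh (tan v)) * hpyth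
  · rw [(hasDerivAt_cos_mul_cosh_mul_arsinh_tan _ (by simp : 0 < cos 0)).deriv]
    simp
end

section
/- For θ ∈ (0, π/2), define h(θ) = (1/(8 tan²θ))·(tan θ sec θ (2 sec²θ − 3) + (1 + 4 tan²θ)·log((1 + tan(θ/2))/(1 − tan(θ/2)))). Then lim_{θ→0⁺} h(θ)/tan θ = 2/3. -/
open Real Filter Topology

/-!
Put `u = tan (θ / 2)`. Then `tan θ = 2u / (1 - u²)`, `sec θ = (1 + u²) / (1 - u²)`, and the
logarithm is `log (1 + u) - log (1 - u) = 2u + 2u³/3 + O(u⁵)`. With the cubic Taylor polynomial in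
place of the logarithm, the terms in `u⁻³` and `u⁻¹` of `h θ / tan θ` cancel, leaving a rational
function equal to `2/3` at `u = 0`; the Taylor remainder only contributes `O(u²)`.
-/

theorem abs_log_sub_log_sub_cubic_le {u : ℝ} (hu : |u| < 1) :
    |log (1 + u) - log (1 - u) - (2 * u + 2 / 3 * u ^ 3)| ≤ 2 * |u| ^ 5 / (1 - |u|) := by
  have hplus := abs_log_sub_add_sum_range_le hu 4
  have hminus := abs_log_sub_add_sum_range_le (x := -u) (by rwa [abs_neg]) 4
  simp only [Finset.sum_range_succ, Finset.sum_range_zero, abs_neg, sub_neg_eq_add] at hplus hminus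
  rw [abs_le] at hplus hminus ⊢
  norm_num [mul_div_assoc, Odd.neg_pow (by decide : Odd 3)] at hplus hminus ⊢
  constructor <;> linarith [hplus.1, hplus.2, hminus.1, hminus.2]

theorem tendsto_log_sub_log_sub_cubic_div_pow_three :
    Tendsto (fun u => (log (1 + u) - log (1 - u) - (2 * u + 2 / 3 * u ^ 3)) / u ^ 3)
      (𝓝 0) (𝓝 0) := by
  have hbound : Tendsto (fun u : ℝ => 2 * |u| ^ 2 / (1 - |u|)) (𝓝 0) (𝓝 0) := by
    have : ContinuousAt (fun u : ℝ => 2 * |u| ^ 2 / (1 - |u|)) 0 :=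
      ContinuousAt.div (by fun_prop) (by fun_prop) (by norm_num)
    simpa using this.tendsto
  refine squeeze_zero_norm' ?_ hbound
  filter_upwards [eventually_abs_sub_lt 0 one_pos] with u hu
  rw [sub_zero] at hu
  rcases eq_or_ne u 0 with rfl | hu0
  · simp
  have hpos : 0 < |u| := abs_pos.2 hu0
  rw [norm_div, norm_pow, Real.norm_eq_abs, Real.norm_eq_abs, div_le_iff₀ (by positivity)]
  calc _ ≤ 2 * |u| ^ 5 / (1 - |u|) := abs_log_sub_log_sub_cubic_le hu
    _ = _ := by field_simp

/-- `h θ / tan θ` in the variable `u = tan (θ / 2)`. -/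
noncomputable def halfTanRatio (u : ℝ) : ℝ :=
  (128 / 3 - 26 * u ^ 2 + 14 / 3 * u ^ 4 + 10 * u ^ 6 + 2 / 3 * u ^ 8) / (64 * (1 - u ^ 2))
    + (1 + 14 * u ^ 2 + u ^ 4) * (1 - u ^ 2) / 64
      * ((log (1 + u) - log (1 - u) - (2 * u + 2 / 3 * u ^ 3)) / u ^ 3)

theorem halfTanRatio_eq {u : ℝ} (hu : u ≠ 0) (hu1 : 1 - u ^ 2 ≠ 0) :
    1 / (8 * (2 * u / (1 - u ^ 2)) ^ 2)
        * (2 * u / (1 - u ^ 2) * (1 / ((1 - u ^ 2) / (1 + u ^ 2)))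
            * (2 * (1 / ((1 - u ^ 2) / (1 + u ^ 2))) ^ 2 - 3)
          + (1 + 4 * (2 * u / (1 - u ^ 2)) ^ 2) * log ((1 + u) / (1 - u)))
        / (2 * u / (1 - u ^ 2)) = halfTanRatio u := by
  have hplus : 1 + u ≠ 0 := fun h => hu1 (by linear_combination (1 - u) * h)
  have hminus : 1 - u ≠ 0 := fun h => hu1 (by linear_combination (1 + u) * h)
  have hsq : 1 + u ^ 2 ≠ 0 := by positivity
  rw [log_div hplus hminus, halfTanRatio]
  field_simp
  ring

theorem tendsto_halfTanRatio : Tendsto halfTanRatio (𝓝 0) (𝓝 (2 / 3)) := by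
  have hrat : ContinuousAt (fun u : ℝ =>
      (128 / 3 - 26 * u ^ 2 + 14 / 3 * u ^ 4 + 10 * u ^ 6 + 2 / 3 * u ^ 8) / (64 * (1 - u ^ 2))) 0 :=
    ContinuousAt.div (by fun_prop) (by fun_prop) (by norm_num)
  have hcoef : Continuous fun u : ℝ => (1 + 14 * u ^ 2 + u ^ 4) * (1 - u ^ 2) / 64 := by fun_prop
  have hsum := hrat.tendsto.add ((hcoef.tendsto 0).mul tendsto_log_sub_log_sub_cubic_div_pow_three)
  norm_num at hsum
  exact hsum

theorem tan_mem_Ioo_zero_one {x : ℝ} (hx : x ∈ Set.Ioo 0 (π / 4)) : tan x ∈ Set.Ioo 0 1 := by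
  obtain ⟨hx0, hx1⟩ := hx
  refine ⟨tan_pos_of_pos_of_lt_pi_div_two hx0 (by linarith [pi_pos]), ?_⟩
  rw [← tan_pi_div_four]
  exact tan_lt_tan_of_nonneg_of_lt_pi_div_two hx0.le (by linarith [pi_pos]) hx1

/-- With `h(θ) = (1/(8 tan²θ))(tan θ sec θ (2 sec²θ − 3)
  + (1 + 4 tan²θ) log((1+tan(θ/2))/(1−tan(θ/2))))`, one has `h(θ)/tan θ → 2/3` as `θ → 0⁺`. -/
theorem stmt_13 (h : ℝ → ℝ)
    (hh : ∀ θ ∈ Set.Ioo 0 (π/2),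
      h θ = (1 / (8 * tan θ ^ 2)) *
        (tan θ * (1 / cos θ) * (2 * (1 / cos θ) ^ 2 - 3)
          + (1 + 4 * tan θ ^ 2) * Real.log ((1 + tan (θ/2)) / (1 - tan (θ/2))))) :
    Tendsto (fun θ => h θ / tan θ) (nhdsWithin 0 (Set.Ioi 0)) (nhds (2/3)) := by
  have hratio : ∀ᶠ θ in 𝓝[>] 0, h θ / tan θ = halfTanRatio (tan (θ / 2)) := by
    filter_upwards [Ioo_mem_nhdsGT (by positivity : (0 : ℝ) < π / 2)] with θ hθ
    obtain ⟨hu0, hu1⟩ := tan_mem_Ioo_zero_one (x := θ / 2) ⟨by linarith [hθ.1], by linarith [hθ.2]⟩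
    have hcos : cos θ ≠ -1 := by linarith [cos_pos_of_mem_Ioo ⟨by linarith [hθ.1, pi_pos], hθ.2⟩]
    rw [hh θ hθ, cos_eq_two_mul_tan_half_div_one_sub_tan_half_sq θ hcos,
      tan_eq_one_sub_tan_half_sq_div_one_add_tan_half_sq θ]
    exact halfTanRatio_eq hu0.ne' (by nlinarith)
  have htan : Tendsto (fun θ => tan (θ / 2)) (𝓝[>] 0) (𝓝 0) := by
    have hcont : ContinuousAt (fun θ => tan (θ / 2)) 0 :=
      ContinuousAt.comp (g := tan) (continuousAt_tan.2 (by simp)) (by fun_prop)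
    simpa using hcont.tendsto.mono_left nhdsWithin_le_nhds
  exact (tendsto_halfTanRatio.comp htan).congr' (EventuallyEq.symm hratio)
end
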